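/- arXiv:math/9405205 — 8 statements merged into one kernel-verified Lean document; each statement's English description precedes it below -/
import Mathlib

section
/- In any commutative semiring R with an element t satisfying t = 1 + t², one has t⁷ = t. -/
theorem t_pow_seven {R : Type*} [CommSemiring R] (t : R) (ht : t = 1 + t ^ 2) :
    t ^ 7 = t := by
  have key : ∀ k : ℕ, t ^ (k + 1) = t ^ k + t ^ (k + 2) := by
    intro k
    calc t ^ (k + 1) = t ^ k * t := by ring
      _ = t ^ k * (1 + t ^ 2) := by rw [← ht]
      _ = t ^ k + t ^ (k + 2) := by ring
  have h1 : t ^ 1 = t ^ 0 + t ^ 2 := key 0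
  have h2 : t ^ 2 = t ^ 1 + t ^ 3 := key 1
  have h3 : t ^ 3 = t ^ 2 + t ^ 4 := key 2
  have h4 : t ^ 4 = t ^ 3 + t ^ 5 := key 3
  have h5 : t ^ 5 = t ^ 4 + t ^ 6 := key 4
  have h6 : t ^ 6 = t ^ 5 + t ^ 7 := key 5
  have h7 : t ^ 7 = t ^ 6 + t ^ 8 := key 6
  symm
  calc t = t ^ 0 + t ^ 2 := by rw [← h1]; exact (pow_one t).symm
    _ = t ^ 0 + t ^ 1 + t ^ 3 := by rw [h2]; try ring
    _ = t ^ 0 + t ^ 1 + t ^ 2 + t ^ 4 := by rw [h3]; try ring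
    _ = t ^ 1 + t ^ 1 + t ^ 4 := by rw [h1]; try ring
    _ = t ^ 1 + t ^ 1 + t ^ 3 + t ^ 5 := by rw [h4]; try ring
    _ = t ^ 1 + t ^ 2 + t ^ 5 := by rw [h2]; try ring
    _ = t ^ 1 + t ^ 2 + t ^ 4 + t ^ 6 := by rw [h5]; try ring
    _ = t ^ 1 + t ^ 3 + t ^ 6 := by rw [h3]; try ring
    _ = t ^ 2 + t ^ 6 := by rw [h2]; try ring
    _ = t ^ 2 + t ^ 5 + t ^ 7 := by rw [h6]; try ring
    _ = t ^ 2 + t ^ 4 + t ^ 6 + t ^ 7 := by rw [h5]; try ring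
    _ = t ^ 3 + t ^ 6 + t ^ 7 := by rw [h3]; try ring
    _ = t ^ 3 + t ^ 5 + t ^ 7 + t ^ 7 := by rw [h6]; try ring
    _ = t ^ 4 + t ^ 7 + t ^ 7 := by rw [h4]; try ring
    _ = t ^ 4 + t ^ 6 + t ^ 7 + t ^ 8 := by rw [h7]; try ring
    _ = t ^ 5 + t ^ 7 + t ^ 8 := by rw [h5]; try ring
    _ = t ^ 6 + t ^ 8 := by rw [h6]; try ring
    _ = t ^ 7 := by rw [h7]; try ring
end

section
/- In any commutative semiring R with an element t satisfying t = 1 + t², one has t^(k+6) = t^k for every positive integer k (but not necessarily t⁶ = 1). -/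
theorem t_pow_period_six {R : Type*} [CommSemiring R] (t : R) (ht : t = 1 + t ^ 2)
    (k : ℕ) (hk : 1 ≤ k) : t ^ (k + 6) = t ^ k := by
  have e2 : t ^ 2 = t + t ^ 3 := by
    have h : t ^ 2 = t * (1 + t ^ 2) := by rw [← ht]; ring
    rw [h]; ring
  have e3 : t ^ 3 = t ^ 2 + t ^ 4 := by
    have h : t ^ 3 = t ^ 2 * (1 + t ^ 2) := by rw [← ht]; ring
    rw [h]; ring
  have e4 : t ^ 4 = t ^ 3 + t ^ 5 := by
    have h : t ^ 4 = t ^ 3 * (1 + t ^ 2) := by rw [← ht]; ring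
    rw [h]; ring
  have e5 : t ^ 5 = t ^ 4 + t ^ 6 := by
    have h : t ^ 5 = t ^ 4 * (1 + t ^ 2) := by rw [← ht]; ring
    rw [h]; ring
  have e6 : t ^ 6 = t ^ 5 + t ^ 7 := by
    have h : t ^ 6 = t ^ 5 * (1 + t ^ 2) := by rw [← ht]; ring
    rw [h]; ring
  have e7 : t ^ 7 = t ^ 6 + t ^ 8 := by
    have h : t ^ 7 = t ^ 6 * (1 + t ^ 2) := by rw [← ht]; ring
    rw [h]; ring
  have h7 : t = t ^ 7 := by
    calc t = 1 + t ^ 2 := ht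
      _ = 1 + t + t ^ 3 := by rw [e2]; try ring
      _ = 1 + t + t ^ 2 + t ^ 4 := by rw [e3]; try ring
      _ = 1 + t + t ^ 2 + t ^ 3 + t ^ 5 := by rw [e4]; try ring
      _ = 1 + t + t ^ 2 + t ^ 3 + t ^ 4 + t ^ 6 := by rw [e5]; try ring
      _ = 1 + t + t ^ 2 + t ^ 3 + t ^ 4 + t ^ 5 + t ^ 7 := by rw [e6]; try ring
      _ = 1 + t + t ^ 2 + t ^ 3 + 2 * t ^ 4 + t ^ 6 + t ^ 7 := by rw [e5]; try ring
      _ = 1 + t + t ^ 2 + t ^ 3 + 2 * t ^ 4 + t ^ 5 + 2 * t ^ 7 := by rw [e6]; try ring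
      _ = 1 + t + t ^ 2 + t ^ 3 + 2 * t ^ 4 + t ^ 5 + t ^ 6 + t ^ 7 + t ^ 8 := by
          rw [e7]; try ring
      _ = (1 + t ^ 2) + (t + t ^ 3 + 2 * t ^ 4 + t ^ 5 + t ^ 6 + t ^ 7 + t ^ 8) := by ring
      _ = t + (t + t ^ 3 + 2 * t ^ 4 + t ^ 5 + t ^ 6 + t ^ 7 + t ^ 8) := by rw [← ht]
      _ = 2 * t + t ^ 3 + 2 * t ^ 4 + t ^ 5 + t ^ 6 + t ^ 7 + t ^ 8 := by ring
      _ = t + t ^ 2 + 2 * t ^ 4 + t ^ 5 + t ^ 6 + t ^ 7 + t ^ 8 := by rw [e2]; try ring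
      _ = t + t ^ 3 + t ^ 4 + t ^ 5 + t ^ 6 + t ^ 7 + t ^ 8 := by rw [e3]; try ring
      _ = t ^ 2 + t ^ 4 + t ^ 5 + t ^ 6 + t ^ 7 + t ^ 8 := by rw [e2]; try ring
      _ = t ^ 3 + t ^ 5 + t ^ 6 + t ^ 7 + t ^ 8 := by rw [e3]; try ring
      _ = t ^ 4 + t ^ 6 + t ^ 7 + t ^ 8 := by rw [e4]; try ring
      _ = t ^ 5 + t ^ 7 + t ^ 8 := by rw [e5]; try ring
      _ = t ^ 6 + t ^ 8 := by rw [e6]; try ring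
      _ = t ^ 7 := e7.symm
  obtain ⟨j, rfl⟩ := Nat.exists_eq_add_of_le hk
  calc t ^ (1 + j + 6) = t ^ j * t ^ 7 := by ring
    _ = t ^ j * t := by rw [← h7]
    _ = t ^ (1 + j) := by ring
end

section
/- In any commutative semiring R with an element t satisfying t = 1 + t², the following identity holds: t⁷ + t⁵ + t⁴ + t³ = t⁵ + t⁴ + t³ + t. -/
theorem t7_plus_catalysts {R : Type*} [CommSemiring R] (t : R) (ht : t = 1 + t ^ 2) :
    t ^ 7 + t ^ 5 + t ^ 4 + t ^ 3 = t ^ 5 + t ^ 4 + t ^ 3 + t := by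
  have h : ∀ n : ℕ, t ^ (n + 2) = t ^ (n + 1) + t ^ (n + 3) := fun n => by
    calc t ^ (n + 2) = t ^ (n + 1) * t := by ring
      _ = t ^ (n + 1) * (1 + t ^ 2) := by rw [← ht]
      _ = t ^ (n + 1) + t ^ (n + 3) := by ring
  have h0 := h 0; have h1 := h 1; have h2 := h 2; have h3 := h 3; have h4 := h 4
  norm_num at h0 h1 h2 h3 h4
  calc t ^ 7 + t ^ 5 + t ^ 4 + t ^ 3 = (t ^ 5 + t ^ 7) + t ^ 4 + t ^ 3 := by ring
    _ = t ^ 6 + t ^ 4 + t ^ 3 := by rw [← h4]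
    _ = (t ^ 4 + t ^ 6) + t ^ 3 := by ring
    _ = t ^ 5 + t ^ 3 := by rw [← h3]
    _ = t ^ 3 + t ^ 5 := by ring
    _ = t ^ 4 := by rw [← h2]
    _ = t ^ 3 + t ^ 5 := h2
    _ = (t ^ 2 + t ^ 4) + t ^ 5 := by rw [h1]
    _ = (t + t ^ 3) + t ^ 4 + t ^ 5 := by rw [h0]
    _ = t ^ 5 + t ^ 4 + t ^ 3 + t := by ring
end

section
/- In any commutative semiring R with an element t satisfying t = 1 + t², for any element x of R and any natural number k, we have x·t + x·t^(k+3) + x·t^k = x·t. (Catalyst lemma: a positive power of t allows deletion of t^(k+3) + t^k.) -/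
theorem catalyst_aux {R : Type*} [CommSemiring R] (t : R) (ht : t = 1 + t ^ 2)
    (k : ℕ) : t + t ^ (k + 3) + t ^ k = t := by
  induction k with
  | zero =>
    calc t + t ^ 3 + t ^ 0 = t * (1 + t ^ 2) + 1 := by ring
      _ = t * t + 1 := by rw [← ht]
      _ = 1 + t ^ 2 := by ring
      _ = t := ht.symm
  | succ k ih =>
    have h2 : t ^ 2 + t ^ (k + 4) + t ^ (k + 1) = t ^ 2 := by
      calc t ^ 2 + t ^ (k + 4) + t ^ (k + 1) = (t + t ^ (k + 3) + t ^ k) * t := by ring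
        _ = t * t := by rw [ih]
        _ = t ^ 2 := by ring
    calc t + t ^ (k + 1 + 3) + t ^ (k + 1)
        = 1 + (t ^ 2 + t ^ (k + 4) + t ^ (k + 1)) := by nth_rewrite 1 [ht]; ring
      _ = 1 + t ^ 2 := by rw [h2]
      _ = t := ht.symm

theorem catalyst_lemma {R : Type*} [CommSemiring R] (t : R) (ht : t = 1 + t ^ 2)
    (x : R) (k : ℕ) : x * t + x * t ^ (k + 3) + x * t ^ k = x * t := by
  calc x * t + x * t ^ (k + 3) + x * t ^ k = x * (t + t ^ (k + 3) + t ^ k) := by ring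
    _ = x * t := by rw [catalyst_aux t ht k]
end

section
/- In any commutative semiring R with an element t satisfying t = 1 + t², if r ≥ 1 then t^r + 1 + t² + t⁴ = t^r (i.e., in the presence of a positive power of t as catalyst, the element Q = 1 + t² + t⁴ can be absorbed). -/
theorem Q_absorbed_by_catalyst {R : Type*} [CommSemiring R] (t : R) (ht : t = 1 + t ^ 2)
    (r : ℕ) (hr : 1 ≤ r) : t ^ r + 1 + t ^ 2 + t ^ 4 = t ^ r := by
  have hsq : t ^ 2 + (1 + t ^ 2 + t ^ 4) = t ^ 2 := by
    calc t ^ 2 + (1 + t ^ 2 + t ^ 4) = (1 + t ^ 2) ^ 2 := by ring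
    _ = t ^ 2 := by rw [← ht]
  have hb : t + (1 + t ^ 2 + t ^ 4) = t := by
    calc t + (1 + t ^ 2 + t ^ 4) = 1 + (t ^ 2 + (1 + t ^ 2 + t ^ 4)) := by
          nth_rewrite 1 [ht]; ring
    _ = 1 + t ^ 2 := by rw [hsq]
    _ = t := ht.symm
  have htQ : t * (1 + t ^ 2 + t ^ 4) + (1 + t ^ 2 + t ^ 4) = t * (1 + t ^ 2 + t ^ 4) := by
    calc t * (1 + t ^ 2 + t ^ 4) + (1 + t ^ 2 + t ^ 4)
        = (t + (1 + t ^ 2 + t ^ 4)) + (t ^ 3 + t ^ 5) := by ring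
    _ = t + (t ^ 3 + t ^ 5) := by rw [hb]
    _ = t * (1 + t ^ 2 + t ^ 4) := by ring
  have key : ∀ n, 1 ≤ n → t ^ n + (1 + t ^ 2 + t ^ 4) = t ^ n := by
    intro n hn
    induction n, hn using Nat.le_induction with
    | base => simpa using hb
    | succ n hn ih =>
      calc t ^ (n + 1) + (1 + t ^ 2 + t ^ 4) = t * t ^ n + (1 + t ^ 2 + t ^ 4) := by ring
      _ = t * (t ^ n + (1 + t ^ 2 + t ^ 4)) + (1 + t ^ 2 + t ^ 4) := by rw [ih]
      _ = t * t ^ n + (t * (1 + t ^ 2 + t ^ 4) + (1 + t ^ 2 + t ^ 4)) := by ring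
      _ = t * t ^ n + t * (1 + t ^ 2 + t ^ 4) := by rw [htQ]
      _ = t * (t ^ n + (1 + t ^ 2 + t ^ 4)) := by ring
      _ = t * t ^ n := by rw [ih]
      _ = t ^ (n + 1) := by ring
  calc t ^ r + 1 + t ^ 2 + t ^ 4 = t ^ r + (1 + t ^ 2 + t ^ 4) := by ring
  _ = t ^ r := key r hr
end

section
/- If two polynomials P, Q ∈ ℕ[X] become equal in every commutative semiring under every interpretation of X as an element t satisfying t = 1 + t², and if P and Q are both of the form a + bX² + cX⁴ with nonnegative integer coefficients where either some coefficient is 0 or a ≥ b = c = 1, then P = Q as polynomials. -/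
open Polynomial

noncomputable def om : ℂ := ⟨1/2, Real.sqrt 3 / 2⟩

lemma om_rel : om = 1 + om ^ 2 := by
  have h3 : Real.sqrt 3 * Real.sqrt 3 = 3 := Real.mul_self_sqrt (by norm_num)
  apply Complex.ext <;>
    simp [om, pow_two, Complex.mul_re, Complex.mul_im, Complex.add_re, Complex.add_im] <;>
    nlinarith [h3]

lemma complex_rel (a b c a' b' c' : ℕ)
    (hC : (a:ℂ) + b * om ^ 2 + c * om ^ 4 = (a':ℂ) + b' * om ^ 2 + c' * om ^ 4) :
    a + b' = a' + b ∧ b + c' = b' + c := by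
  have h2 : om ^ 2 = om - 1 := by linear_combination -om_rel
  have h4 : om ^ 4 = -om := by linear_combination (om ^ 2 + om) * h2
  rw [h2, h4] at hC
  have him := congrArg Complex.im hC
  have hre := congrArg Complex.re hC
  have h3 : Real.sqrt 3 > 0 := Real.sqrt_pos.mpr (by norm_num)
  simp [om, Complex.add_im, Complex.add_re, Complex.mul_im, Complex.mul_re,
    Complex.sub_im, Complex.sub_re, Complex.neg_im, Complex.neg_re] at him hre
  have hbc : (b:ℝ) + c' = b' + c := by nlinarith [him, h3]
  have hab : (a:ℝ) + b' = a' + b := by nlinarith [hre, hbc]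
  exact ⟨by exact_mod_cast hab, by exact_mod_cast hbc⟩

lemma enat_contra (a b c a' b' c' : ℕ) (hlt : a' < a)
    (hab : a + b' = a' + b) (hbc : b + c' = b' + c)
    (hPn : (a = 0 ∨ b = 0 ∨ c = 0) ∨ (b = 1 ∧ c = 1 ∧ 1 ≤ a))
    (hE : (a:ℕ∞) + b * (⊤:ℕ∞) ^ 2 + c * (⊤:ℕ∞) ^ 4
        = (a':ℕ∞) + b' * (⊤:ℕ∞) ^ 2 + c' * (⊤:ℕ∞) ^ 4) : False := by
  obtain ⟨hb, hc, ha⟩ : b = 1 ∧ c = 1 ∧ 1 ≤ a := by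
    rcases hPn with (h0 | h0) | h0
    · omega
    · omega
    · exact h0
  have hb' : b' = 0 := by omega
  have hc' : c' = 0 := by omega
  subst hb hc hb' hc'
  have h2 : (⊤:ℕ∞) ^ 2 = ⊤ := rfl
  have h4 : (⊤:ℕ∞) ^ 4 = ⊤ := rfl
  rw [h2, h4] at hE
  norm_num [add_top] at hE

theorem normal_form_unique (P Q : Polynomial ℕ)
    (h : ∀ (R : Type) [CommSemiring R] (t : R), t = 1 + t ^ 2 →
      P.eval₂ (Nat.castRingHom R) t = Q.eval₂ (Nat.castRingHom R) t)
    (a b c : ℕ) (hP : P = C a + C b * X ^ 2 + C c * X ^ 4)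
    (hPn : (a = 0 ∨ b = 0 ∨ c = 0) ∨ (b = 1 ∧ c = 1 ∧ 1 ≤ a))
    (a' b' c' : ℕ) (hQ : Q = C a' + C b' * X ^ 2 + C c' * X ^ 4)
    (hQn : (a' = 0 ∨ b' = 0 ∨ c' = 0) ∨ (b' = 1 ∧ c' = 1 ∧ 1 ≤ a')) :
    P = Q := by
  subst hP hQ
  have hC := h ℂ om om_rel
  simp only [eval₂_add, eval₂_mul, eval₂_pow, eval₂_C, eval₂_X] at hC
  simp only [Nat.castRingHom, RingHom.coe_mk, MonoidHom.coe_mk, OneHom.coe_mk] at hC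
  obtain ⟨hab, hbc⟩ := complex_rel a b c a' b' c' hC
  have hE := h ℕ∞ ⊤ rfl
  simp only [eval₂_add, eval₂_mul, eval₂_pow, eval₂_C, eval₂_X] at hE
  simp only [Nat.castRingHom, RingHom.coe_mk, MonoidHom.coe_mk, OneHom.coe_mk] at hE
  rcases Nat.lt_trichotomy a a' with hlt | heq | hlt
  · exact absurd (enat_contra a' b' c' a b c hlt hab.symm hbc.symm hQn hE.symm) not_false
  · obtain ⟨hb, hc⟩ : b = b' ∧ c = c' := by omega
    rw [heq, hb, hc]
  · exact absurd (enat_contra a b c a' b' c' hlt hab hbc hPn hE) not_false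
end

section
/- For every polynomial P ∈ ℕ[X] there exist nonnegative integers a, b, c with either (a = 0 ∨ b = 0 ∨ c = 0) or (b = 1 ∧ c = 1 ∧ a ≥ 1), such that in every commutative semiring R and for every t ∈ R with t = 1 + t², P(t) = a + b·t² + c·t⁴. -/
open Polynomial

section NFaux

variable {R : Type} [CommSemiring R]

private lemma nf_key (t : R) (ht : t = 1 + t ^ 2) (k : ℕ) :
    t ^ (k + 1) = t ^ k + t ^ (k + 2) := by
  have h : t ^ k * t = t ^ k * (1 + t ^ 2) := by rw [← ht]
  calc t ^ (k + 1) = t ^ k * t := by ring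
    _ = t ^ k * (1 + t ^ 2) := h
    _ = t ^ k + t ^ (k + 2) := by ring

private lemma nf_hA0 (t : R) (ht : t = 1 + t ^ 2) : (1 : R) + 2 * t ^ 2 + t ^ 4 = t ^ 2 := by
  have h : t * t = (1 + t ^ 2) * (1 + t ^ 2) := by rw [← ht]
  calc (1 : R) + 2 * t ^ 2 + t ^ 4 = (1 + t ^ 2) * (1 + t ^ 2) := by ring
    _ = t * t := h.symm
    _ = t ^ 2 := by ring

private lemma nf_habs (t : R) (ht : t = 1 + t ^ 2) :
    ∀ k : ℕ, t ^ (k + 1) + (1 + t ^ 2 + t ^ 4) = t ^ (k + 1) := by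
  intro k
  induction k with
  | zero =>
    have h1 : t ^ (0 + 1) = 1 + t ^ 2 := by rw [pow_one]; exact ht
    calc t ^ (0 + 1) + (1 + t ^ 2 + t ^ 4) = 1 + (1 + 2 * t ^ 2 + t ^ 4) := by rw [h1]; ring
      _ = 1 + t ^ 2 := by rw [nf_hA0 t ht]
      _ = t ^ (0 + 1) := h1.symm
  | succ k ih =>
    have hk := nf_key t ht (k + 1)
    calc t ^ (k + 1 + 1) + (1 + t ^ 2 + t ^ 4)
        = (t ^ (k + 1) + (1 + t ^ 2 + t ^ 4)) + t ^ (k + 1 + 2) := by rw [hk]; ring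
      _ = t ^ (k + 1) + t ^ (k + 1 + 2) := by rw [ih]
      _ = t ^ (k + 1 + 1) := hk.symm

private lemma nf_t2e (t : R) (ht : t = 1 + t ^ 2) :
    t ^ 2 + (1 + t ^ 2 + t ^ 4) = t ^ 2 := by simpa using nf_habs t ht 1

private lemma nf_t4e (t : R) (ht : t = 1 + t ^ 2) :
    t ^ 4 + (1 + t ^ 2 + t ^ 4) = t ^ 4 := by simpa using nf_habs t ht 3

private lemma nf_t3 (t : R) (ht : t = 1 + t ^ 2) : t ^ 3 = t ^ 2 + t ^ 4 := by
  simpa using nf_key t ht 2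

private lemma nf_et (t : R) (ht : t = 1 + t ^ 2) :
    (1 + t ^ 2 + t ^ 4) * t = 1 + t ^ 2 + t ^ 4 := by
  have k3 : t ^ 4 = t ^ 3 + t ^ 5 := by simpa using nf_key t ht 3
  have h1 : t ^ 1 = 1 + t ^ 2 := by rw [pow_one]; exact ht
  calc (1 + t ^ 2 + t ^ 4) * t = t ^ 1 + (t ^ 3 + t ^ 5) := by ring
    _ = t ^ 1 + t ^ 4 := by rw [← k3]
    _ = 1 + t ^ 2 + t ^ 4 := by rw [h1]

private lemma nf_t6 (t : R) (ht : t = 1 + t ^ 2) : t ^ 6 = 2 + t ^ 2 + t ^ 4 := by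
  have he2 : (1 + t ^ 2 + t ^ 4) * t ^ 2 = 1 + t ^ 2 + t ^ 4 := by
    calc (1 + t ^ 2 + t ^ 4) * t ^ 2 = ((1 + t ^ 2 + t ^ 4) * t) * t := by ring
      _ = (1 + t ^ 2 + t ^ 4) * t := congrArg (· * t) (nf_et t ht)
      _ = 1 + t ^ 2 + t ^ 4 := nf_et t ht
  have habs6 : t ^ 6 + (1 + t ^ 2 + t ^ 4) = t ^ 6 := by simpa using nf_habs t ht 5
  calc t ^ 6 = t ^ 6 + (1 + t ^ 2 + t ^ 4) := habs6.symm
    _ = 1 + (1 + t ^ 2 + t ^ 4) * t ^ 2 := by ring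
    _ = 1 + (1 + t ^ 2 + t ^ 4) := by rw [he2]
    _ = 2 + t ^ 2 + t ^ 4 := by ring

private lemma nf_t5 (t : R) (ht : t = 1 + t ^ 2) : t ^ 5 = 2 + t ^ 2 + 2 * t ^ 4 := by
  have h : t ^ 4 * t = t ^ 4 * (1 + t ^ 2) := by rw [← ht]
  calc t ^ 5 = t ^ 4 * t := by ring
    _ = t ^ 4 * (1 + t ^ 2) := h
    _ = t ^ 4 + t ^ 6 := by ring
    _ = t ^ 4 + (2 + t ^ 2 + t ^ 4) := by rw [nf_t6 t ht]
    _ = 2 + t ^ 2 + 2 * t ^ 4 := by ring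

end NFaux

private def pwNF : ℕ → ℕ × ℕ × ℕ
  | 0 => (1, 0, 0)
  | n + 1 =>
    ((pwNF n).1 + 2 * (pwNF n).2.2,
     (pwNF n).1 + (pwNF n).2.1 + (pwNF n).2.2,
     (pwNF n).2.1 + 2 * (pwNF n).2.2)

private lemma pw_spec {R : Type} [CommSemiring R] (t : R) (ht : t = 1 + t ^ 2) (n : ℕ) :
    t ^ n = ((pwNF n).1 : R) + ((pwNF n).2.1 : R) * t ^ 2 + ((pwNF n).2.2 : R) * t ^ 4 := by
  induction n with
  | zero => simp [pwNF]
  | succ n ih =>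
    have htt : ∀ x : R, x * t = x * (1 + t ^ 2) := fun x => by rw [← ht]
    calc t ^ (n + 1) = t ^ n * t := by ring
      _ = (((pwNF n).1 : R) + ((pwNF n).2.1 : R) * t ^ 2 + ((pwNF n).2.2 : R) * t ^ 4) * t := by
          rw [ih]
      _ = ((pwNF n).1 : R) * t + ((pwNF n).2.1 : R) * t ^ 3 + ((pwNF n).2.2 : R) * t ^ 5 := by
          ring
      _ = ((pwNF n).1 : R) * (1 + t ^ 2) + ((pwNF n).2.1 : R) * (t ^ 2 + t ^ 4)
            + ((pwNF n).2.2 : R) * (2 + t ^ 2 + 2 * t ^ 4) := by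
          rw [htt (((pwNF n).1 : R)), nf_t3 t ht, nf_t5 t ht]
      _ = (((pwNF (n + 1)).1 : R)) + ((pwNF (n + 1)).2.1 : R) * t ^ 2
            + ((pwNF (n + 1)).2.2 : R) * t ^ 4 := by
          simp only [pwNF]; push_cast; ring

private lemma nf_normalize (a b c : ℕ) :
    ∃ a' b' c' : ℕ, ((a' = 0 ∨ b' = 0 ∨ c' = 0) ∨ (b' = 1 ∧ c' = 1 ∧ 1 ≤ a')) ∧
      ∀ (R : Type) [CommSemiring R] (t : R), t = 1 + t ^ 2 →
        (a : R) + (b : R) * t ^ 2 + (c : R) * t ^ 4 = (a' : R) + (b' : R) * t ^ 2 + (c' : R) * t ^ 4 := by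
  induction a generalizing b c with
  | zero => exact ⟨0, b, c, Or.inl (Or.inl rfl), fun R _ t _ => rfl⟩
  | succ a ih =>
    match b, c with
    | 0, c => exact ⟨a + 1, 0, c, Or.inl (Or.inr (Or.inl rfl)), fun R _ t _ => rfl⟩
    | b + 1, 0 => exact ⟨a + 1, b + 1, 0, Or.inl (Or.inr (Or.inr rfl)), fun R _ t _ => rfl⟩
    | 1, 1 => exact ⟨a + 1, 1, 1, Or.inr ⟨rfl, rfl, Nat.succ_le_succ (Nat.zero_le a)⟩,
        fun R _ t _ => rfl⟩
    | b + 2, c + 1 =>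
      obtain ⟨a', b', c', hc, h⟩ := ih (b + 1) c
      refine ⟨a', b', c', hc, fun R _ t ht => ?_⟩
      have step : ((a : R) + 1) + ((b : R) + 2) * t ^ 2 + ((c : R) + 1) * t ^ 4
          = (a : R) + ((b : R) + 1) * t ^ 2 + (c : R) * t ^ 4 := by
        calc ((a : R) + 1) + ((b : R) + 2) * t ^ 2 + ((c : R) + 1) * t ^ 4
            = ((a : R) + (b : R) * t ^ 2 + (c : R) * t ^ 4)
              + (t ^ 2 + (1 + t ^ 2 + t ^ 4)) := by ring
          _ = ((a : R) + (b : R) * t ^ 2 + (c : R) * t ^ 4) + t ^ 2 := by rw [nf_t2e t ht]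
          _ = (a : R) + ((b : R) + 1) * t ^ 2 + (c : R) * t ^ 4 := by ring
      calc ((a + 1 : ℕ) : R) + ((b + 2 : ℕ) : R) * t ^ 2 + ((c + 1 : ℕ) : R) * t ^ 4
          = ((a : R) + 1) + ((b : R) + 2) * t ^ 2 + ((c : R) + 1) * t ^ 4 := by push_cast; ring
        _ = (a : R) + ((b : R) + 1) * t ^ 2 + (c : R) * t ^ 4 := step
        _ = ((a : ℕ) : R) + ((b + 1 : ℕ) : R) * t ^ 2 + ((c : ℕ) : R) * t ^ 4 := by
            push_cast; ring
        _ = _ := h R t ht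
    | 1, c + 2 =>
      obtain ⟨a', b', c', hc, h⟩ := ih 0 (c + 1)
      refine ⟨a', b', c', hc, fun R _ t ht => ?_⟩
      have step : ((a : R) + 1) + 1 * t ^ 2 + ((c : R) + 2) * t ^ 4
          = (a : R) + 0 * t ^ 2 + ((c : R) + 1) * t ^ 4 := by
        calc ((a : R) + 1) + 1 * t ^ 2 + ((c : R) + 2) * t ^ 4
            = ((a : R) + (c : R) * t ^ 4) + (t ^ 4 + (1 + t ^ 2 + t ^ 4)) := by ring
          _ = ((a : R) + (c : R) * t ^ 4) + t ^ 4 := by rw [nf_t4e t ht]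
          _ = (a : R) + 0 * t ^ 2 + ((c : R) + 1) * t ^ 4 := by ring
      calc ((a + 1 : ℕ) : R) + ((1 : ℕ) : R) * t ^ 2 + ((c + 2 : ℕ) : R) * t ^ 4
          = ((a : R) + 1) + 1 * t ^ 2 + ((c : R) + 2) * t ^ 4 := by push_cast; ring
        _ = (a : R) + 0 * t ^ 2 + ((c : R) + 1) * t ^ 4 := step
        _ = ((a : ℕ) : R) + ((0 : ℕ) : R) * t ^ 2 + ((c + 1 : ℕ) : R) * t ^ 4 := by
            push_cast; ring
        _ = _ := h R t ht

theorem normal_form_exists (P : Polynomial ℕ) :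
    ∃ a b c : ℕ, ((a = 0 ∨ b = 0 ∨ c = 0) ∨ (b = 1 ∧ c = 1 ∧ 1 ≤ a)) ∧
      ∀ (R : Type) [CommSemiring R] (t : R), t = 1 + t ^ 2 →
        P.eval₂ (Nat.castRingHom R) t = a + b * t ^ 2 + c * t ^ 4 := by
  induction P using Polynomial.induction_on with
  | C a =>
    refine ⟨a, 0, 0, Or.inl (Or.inr (Or.inl rfl)), fun R _ t ht => ?_⟩
    simp [eval₂_C]
  | add p q hp hq =>
    obtain ⟨a1, b1, c1, _, h1⟩ := hp
    obtain ⟨a2, b2, c2, _, h2⟩ := hq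
    obtain ⟨a, b, c, hc, h⟩ := nf_normalize (a1 + a2) (b1 + b2) (c1 + c2)
    refine ⟨a, b, c, hc, fun R _ t ht => ?_⟩
    rw [eval₂_add, h1 R t ht, h2 R t ht, ← h R t ht]
    push_cast; ring
  | monomial n a _ =>
    obtain ⟨a', b', c', hc, h⟩ := nf_normalize (a * (pwNF (n + 1)).1)
      (a * (pwNF (n + 1)).2.1) (a * (pwNF (n + 1)).2.2)
    refine ⟨a', b', c', hc, fun R _ t ht => ?_⟩
    rw [eval₂_mul, eval₂_C, eval₂_X_pow, ← h R t ht, pw_spec t ht (n + 1)]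
    push_cast
    ring
end

section
/- The explicit map f : T⁷ → T defined by the following five cases is a bijection. Case 1: if at least one of t₁,…,t₄ is nonempty, output [[[[[[t₇,t₆],t₅],t₄],t₃],t₂],t₁]. Case 2: if t₁,…,t₄ are empty and t₅ = [a,b] is nonempty, output [[[[0,t₇],t₆],a],b]. Case 3: if t₁,…,t₅ are empty and t₆ is nonempty, output [[[[[t₆,t₇],0],0],0],0]. Case 4: if t₁,…,t₆ are empty and t₇ = [[[[a,b],c],d],e], output [[[[[0,a],b],c],d],e]. Case 5: otherwise (t₁,…,t₆ empty and the leftward path of t₇ has fewer than 4 nodes), output t₇. -/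
/-- Finite binary trees. -/
inductive T : Type
  | empty : T
  | node : T → T → T

open T in
/-- The explicit map `T⁷ → T` of Blass's Theorem 1, defined by five cases. -/
def f : T × T × T × T × T × T × T → T
  -- Cases 2–5: the first four trees are empty
  | (empty, empty, empty, empty, node a b, t₆, t₇) =>
      -- Case 2
      node (node (node (node empty t₇) t₆) a) b
  | (empty, empty, empty, empty, empty, node x y, t₇) =>
      -- Case 3
      node (node (node (node (node (node x y) t₇) empty) empty) empty) empty
  | (empty, empty, empty, empty, empty, empty,
      node (node (node (node a b) c) d) e) =>
      -- Case 4
      node (node (node (node (node empty a) b) c) d) e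
  | (empty, empty, empty, empty, empty, empty, t₇) =>
      -- Case 5
      t₇
  | (t₁, t₂, t₃, t₄, t₅, t₆, t₇) =>
      -- Case 1: at least one of t₁,…,t₄ is nonempty
      node (node (node (node (node (node t₇ t₆) t₅) t₄) t₃) t₂) t₁

open T in
/-- Explicit inverse of `f`, defined by analyzing the leftward path of the tree. -/
def g : T → T × T × T × T × T × T × T
  | node (node (node (node (node (node u v) w) empty) empty) empty) empty =>
      (empty, empty, empty, empty, empty, node u v, w)
  | node (node (node (node (node (node u v) w) p) q) r) s =>
      (s, r, q, p, w, v, u)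
  | node (node (node (node (node empty a) b) c) d) e =>
      (empty, empty, empty, empty, empty, empty, node (node (node (node a b) c) d) e)
  | node (node (node (node empty u) v) a) b =>
      (empty, empty, empty, empty, node a b, v, u)
  | t => (empty, empty, empty, empty, empty, empty, t)

open T in
theorem g_f : ∀ x, g (f x) = x := by
  rintro ⟨t1, t2, t3, t4, t5, t6, t7⟩
  cases t1 <;> cases t2 <;> cases t3 <;> cases t4 <;> cases t5 <;> cases t6 <;>
    first
      | rfl
      | (rcases t7 with _ | ⟨_ | ⟨_ | ⟨_ | ⟨a, b⟩, c⟩, d⟩, e⟩ <;> rfl)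

open T in
theorem f_g : ∀ t, f (g t) = t := by
  intro t
  rcases t with _ | ⟨_ | ⟨_ | ⟨_ | ⟨_ | ⟨_ | ⟨u, v⟩, w⟩, p⟩, q⟩, r⟩, s⟩ <;>
    first
      | rfl
      | (cases p <;> cases q <;> cases r <;> cases s <;> rfl)

theorem f_bijective : Function.Bijective f :=
  Function.bijective_iff_has_inverse.mpr ⟨g, g_f, f_g⟩
end
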